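/- arXiv:1712.09796 — 2 statements merged into one kernel-verified Lean document; each statement's English description precedes it below -/
import Mathlib

section
/- Let 1 < α < 2, μ < 0, C > 0, M > 0, and let S : [0,∞) → B(X) be a strongly continuous family of bounded linear operators on a Banach space X satisfying ‖S(t)‖ ≤ CM/(1 + |μ|t^α) for all t ≥ 0. Let r > 0, let u ∈ C_b([−r,∞),X), and define κ : [−r,∞) → X by κ(t) = 0 for t ∈ [−r,0] and κ(t) = ∫_0^t S(t−s)u(s) ds for t ≥ 0. If the restriction of u to [0,∞) belongs to PSAP_{ω,r}(X), then κ ∈ C_b([−r,∞),X) and the restriction of κ to [0,∞) belongs to PSAP_{ω,r}(X). -/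
/-!
Extending `S` and `u` constantly to the left makes `κ` a parametric integral with a jointly
continuous integrand, hence continuous, and `‖κ‖ ≤ B ∫₀^∞ g` for `g(t) = CM / (1 + |μ| t^α)`,
which is integrable because `α > 1`.

For the PSAP property, `‖κ(t + ω) - κ(t)‖ ≤ B ω g(t) + ∫₀ᵗ g(σ) d(t - σ) dσ` with
`d(x) = ‖u(x + ω) - u(x)‖`. For `t` in the window `[s - r, s]`, the part `σ ≤ N r` of the integral
is bounded by `∫ g` times the window suprema of `d` over the `N + 1` windows ending at
`s, s - r, …, s - N r`, and the rest by `2 B ∫_{N r}^∞ g`. Cesàro means are invariant under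
shifts, so the means of the first part tend to `0`, while the second is small for large `N`.
-/

open MeasureTheory Filter Set Topology

/-- `v ∈ PSAP_{ω,r}(X)`: pseudo S-asymptotically ω-periodic of class r. -/
def PSAPclass {X : Type*} [NormedAddCommGroup X] (ω r : ℝ) (v : ℝ → X) : Prop :=
  Tendsto (fun T : ℝ => (1 / T) * ∫ s in r..T, ⨆ τ ∈ Set.Icc (s - r) s, ‖v (τ + ω) - v τ‖)
    atTop (nhds 0)

/-- On `ℝ`, points outside the window contribute `sSup ∅ = 0` to this `⨆`; hence the hypotheses
`0 ≤ f` below. -/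
noncomputable def windowSup (r : ℝ) (f : ℝ → ℝ) (s : ℝ) : ℝ := ⨆ τ ∈ Icc (s - r) s, f τ

section windowSup

variable {r s : ℝ} {f : ℝ → ℝ}

lemma windowSup_nonneg (hf : 0 ≤ f) : 0 ≤ windowSup r f s :=
  Real.iSup_nonneg fun τ => Real.iSup_nonneg fun _ => hf τ

lemma windowSup_le {a : ℝ} (ha : 0 ≤ a) (h : ∀ τ ∈ Icc (s - r) s, f τ ≤ a) :
    windowSup r f s ≤ a :=
  Real.iSup_le (fun τ => Real.iSup_le (h τ) ha) ha

lemma windowSup_congr {f' : ℝ → ℝ} (h : EqOn f f' (Icc (s - r) s)) :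
    windowSup r f s = windowSup r f' s :=
  iSup_congr fun _ => iSup_congr fun hτ => h hτ

lemma windowSup_eq_sSup (hf : 0 ≤ f) (hbdd : BddAbove (f '' Icc (s - r) s)) :
    windowSup r f s = sSup (f '' Icc (s - r) s) := by
  rw [sSup_image', windowSup, ← ciSup_subtype_fun (by rwa [← image_eq_range])
    (Real.sSup_empty.trans_le (Real.iSup_nonneg fun τ => hf τ))]

lemma le_windowSup (hf : Continuous f) (hf0 : 0 ≤ f) {τ : ℝ} (hτ : τ ∈ Icc (s - r) s) :
    f τ ≤ windowSup r f s := by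
  have hbdd : BddAbove (f '' Icc (s - r) s) := isCompact_Icc.bddAbove_image hf.continuousOn
  rw [windowSup_eq_sSup hf0 hbdd]
  exact le_csSup hbdd (mem_image_of_mem f hτ)

lemma continuous_windowSup (hf : Continuous f) (hf0 : 0 ≤ f) : Continuous (windowSup r f) := by
  have h : windowSup r f = fun s => sSup ((fun x => f (s - x)) '' Icc 0 r) := by
    ext s
    rw [windowSup_eq_sSup hf0 (isCompact_Icc.bddAbove_image hf.continuousOn),
      ← image_image f (fun x => s - x), image_const_sub_Icc, sub_zero]
  rw [h]
  exact isCompact_Icc.continuous_sSup (f := fun s x => f (s - x)) (by fun_prop)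

lemma le_sum_windowSup (hf : Continuous f) (hf0 : 0 ≤ f) (hr : 0 < r) (N : ℕ) {x : ℝ}
    (hx : x ∈ Icc (s - (N + 1) * r) s) :
    f x ≤ ∑ k ∈ Finset.range (N + 1), windowSup r f (s - k * r) := by
  set y := (s - x) / r
  have hy0 : 0 ≤ y := div_nonneg (by linarith [hx.2]) hr.le
  have hyN : y ≤ N + 1 := (div_le_iff₀ hr).2 (by linarith [hx.1])
  obtain ⟨k, hkN, hky, hyk⟩ : ∃ k : ℕ, k ≤ N ∧ (k : ℝ) ≤ y ∧ y ≤ k + 1 := by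
    rcases le_total ⌊y⌋₊ N with h | h
    · exact ⟨⌊y⌋₊, h, Nat.floor_le hy0, (Nat.lt_floor_add_one y).le⟩
    · exact ⟨N, le_rfl, (Nat.cast_le.2 h).trans (Nat.floor_le hy0), hyN⟩
  have hxk : x ∈ Icc (s - k * r - r) (s - k * r) := by
    have h1 := (le_div_iff₀ hr).1 hky
    have h2 := (div_le_iff₀ hr).1 hyk
    constructor <;> nlinarith
  calc f x ≤ windowSup r f (s - k * r) := le_windowSup hf hf0 hxk
    _ ≤ ∑ k ∈ Finset.range (N + 1), windowSup r f (s - k * r) :=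
      Finset.single_le_sum (f := fun k : ℕ => windowSup r f (s - k * r))
        (fun _ _ => windowSup_nonneg hf0) (Finset.mem_range.2 (Nat.lt_succ_of_le hkN))

end windowSup

def CesaroNull (r : ℝ) (f : ℝ → ℝ) : Prop :=
  Tendsto (fun T : ℝ => (1 / T) * ∫ s in r..T, f s) atTop (𝓝 0)

lemma psapClass_iff_cesaroNull {X : Type*} [NormedAddCommGroup X] {ω r : ℝ} {v : ℝ → X} :
    PSAPclass ω r v ↔ CesaroNull r (windowSup r fun τ => ‖v (τ + ω) - v τ‖) :=
  Iff.rfl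

section CesaroNull

variable {r : ℝ} {f g : ℝ → ℝ}

lemma MeasureTheory.LocallyIntegrable.intervalIntegrable (hf : LocallyIntegrable f) (a b : ℝ) :
    IntervalIntegrable f volume a b :=
  (hf.integrableOn_isCompact isCompact_uIcc).intervalIntegrable

lemma CesaroNull.congr (hf : CesaroNull r f) (h : EqOn f g (Ici r)) : CesaroNull r g := by
  refine hf.congr' ?_
  filter_upwards [eventually_ge_atTop r] with T hT
  rw [intervalIntegral.integral_congr fun s hs => h ?_]
  rw [uIcc_of_le hT] at hs
  exact hs.1

lemma cesaroNull_of_integrableOn (hf : IntegrableOn f (Ioi r)) : CesaroNull r f := by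
  simpa [CesaroNull, one_div] using
    tendsto_inv_atTop_zero.mul (intervalIntegral_tendsto_integral_Ioi r hf tendsto_id)

lemma CesaroNull.const_mul (hf : CesaroNull r f) (c : ℝ) : CesaroNull r fun s => c * f s := by
  simpa [CesaroNull, intervalIntegral.integral_const_mul, mul_left_comm] using
    Tendsto.const_mul c hf

lemma CesaroNull.add (hf : CesaroNull r f) (hg : CesaroNull r g) (hfi : LocallyIntegrable f)
    (hgi : LocallyIntegrable g) : CesaroNull r fun s => f s + g s := by
  simpa [CesaroNull, intervalIntegral.integral_add (hfi.intervalIntegrable _ _)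
    (hgi.intervalIntegrable _ _), mul_add] using Tendsto.add hf hg

lemma cesaroNull_finsetSum {ι : Type*} (t : Finset ι) {f : ι → ℝ → ℝ}
    (hf : ∀ i ∈ t, CesaroNull r (f i)) (hfi : ∀ i ∈ t, LocallyIntegrable (f i)) :
    CesaroNull r fun s => ∑ i ∈ t, f i s := by
  simpa [CesaroNull, Finset.mul_sum,
    intervalIntegral.integral_finsetSum fun i hi => (hfi i hi).intervalIntegrable _ _] using
    tendsto_finsetSum t hf

lemma CesaroNull.comp_sub (hf : CesaroNull r f) (hfi : LocallyIntegrable f) (c : ℝ) :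
    CesaroNull r fun s => f (s - c) := by
  have hhead : Tendsto (fun T : ℝ => (1 / T) * ∫ s in (r - c)..r, f s) atTop (𝓝 0) := by
    simpa [one_div] using tendsto_inv_atTop_zero.mul_const (∫ s in (r - c)..r, f s)
  have hratio : Tendsto (fun T : ℝ => (T - c) / T) atTop (𝓝 1) := by
    have := (tendsto_inv_atTop_zero (𝕜 := ℝ)).const_mul c
    refine ((tendsto_const_nhds (x := (1 : ℝ))).sub this).congr' ?_ |>.trans_eq (by simp)
    filter_upwards [eventually_gt_atTop 0] with T hT
    field_simp
  have htail := hratio.mul (hf.comp (tendsto_atTop_add_const_right atTop (-c) tendsto_id))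
  refine (hhead.add htail).congr' ?_ |>.trans_eq (by simp)
  filter_upwards [eventually_gt_atTop 0, eventually_gt_atTop c] with T hT hTc
  rw [intervalIntegral.integral_comp_sub_right, ← intervalIntegral.integral_add_adjacent_intervals
    (hfi.intervalIntegrable _ _) (hfi.intervalIntegrable r (T - c))]
  simp only [Function.comp, id, ← sub_eq_add_neg]
  field_simp [(sub_pos.2 hTc).ne']

lemma CesaroNull.of_forall_le_add {V : ℝ → ℝ} (hV : ∀ s ≥ r, 0 ≤ V s)
    (h : ∀ ε > 0, ∃ F, CesaroNull r F ∧ LocallyIntegrable F ∧ ∀ s ≥ r, V s ≤ F s + ε) :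
    CesaroNull r V := by
  rw [CesaroNull, NormedAddGroup.tendsto_nhds_zero]
  intro ε hε
  obtain ⟨F, hF, hFi, hVF⟩ := h (ε / 2) (half_pos hε)
  have hmean : Tendsto (fun T : ℝ => (1 / T) * ∫ s in r..T, (F s + ε / 2)) atTop (𝓝 (ε / 2)) := by
    have hconst : Tendsto (fun T : ℝ => ε / 2 - ε / 2 * r * T⁻¹) atTop (𝓝 (ε / 2)) := by
      simpa using tendsto_const_nhds.sub (tendsto_inv_atTop_zero.const_mul (ε / 2 * r))
    refine (Tendsto.add hF hconst).congr' ?_ |>.trans_eq (by simp)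
    filter_upwards [eventually_gt_atTop 0] with T hT
    rw [intervalIntegral.integral_add (hFi.intervalIntegrable _ _) intervalIntegrable_const,
      intervalIntegral.integral_const, smul_eq_mul]
    field_simp
  filter_upwards [hmean.eventually_lt_const (half_lt_self hε), eventually_ge_atTop r,
    eventually_gt_atTop 0] with T hlt hT hT0
  have hint : ∫ s in r..T, V s ≤ ∫ s in r..T, (F s + ε / 2) := by
    simp only [intervalIntegral.integral_of_le hT]
    refine setIntegral_mono_of_nonneg (fun s hs => hV s hs.1.le) (fun s hs => hVF s hs.1.le) ?_
    exact ((hFi.add (locallyIntegrable_const _)).intervalIntegrable r T).1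
  have hnonneg : 0 ≤ ∫ s in r..T, V s := intervalIntegral.integral_nonneg hT fun s hs => hV s hs.1
  rw [Real.norm_of_nonneg (by positivity)]
  exact lt_of_le_of_lt (mul_le_mul_of_nonneg_left hint (by positivity)) hlt

end CesaroNull

lemma PSAPclass.congr {X : Type*} [NormedAddCommGroup X] {ω r : ℝ} {v w : ℝ → X}
    (hv : PSAPclass ω r v) (hω : 0 ≤ ω) (h : EqOn v w (Ici 0)) : PSAPclass ω r w :=
  CesaroNull.congr hv fun s hs => windowSup_congr fun τ hτ => by
    have hτ0 : 0 ≤ τ := by linarith [hτ.1, mem_Ici.1 hs]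
    simp only [h hτ0, h (show (0 : ℝ) ≤ τ + ω by linarith)]

section KernelIntegrals

variable {g : ℝ → ℝ} {a : ℝ}

lemma MeasureTheory.IntegrableOn.intervalIntegrable_of_Ioi (hg : IntegrableOn g (Ioi a)) {b c : ℝ}
    (hab : a ≤ b) (hbc : b ≤ c) : IntervalIntegrable g volume b c :=
  (intervalIntegrable_iff_integrableOn_Ioc_of_le hbc).2
    (hg.mono_set (Ioc_subset_Ioi_self.trans (Ioi_subset_Ioi hab)))

lemma tendsto_setIntegral_Ioi_atTop (hg : IntegrableOn g (Ioi a)) :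
    Tendsto (fun c => ∫ x in Ioi c, g x) atTop (𝓝 0) := by
  have hempty : ⋂ c : ℝ, Ioi c = ∅ :=
    eq_empty_of_forall_notMem fun x hx => lt_irrefl x (mem_iInter.1 hx x)
  simpa [hempty] using tendsto_setIntegral_of_antitone (fun c => measurableSet_Ioi)
    (fun _ _ h => Ioi_subset_Ioi h) ⟨a, hg⟩

lemma integral_mul_comp_sub_le_sum_windowSup {d : ℝ → ℝ} {r D : ℝ} (hg0 : 0 ≤ g)
    (hgi : IntegrableOn g (Ioi 0)) (hd : Continuous d) (hd0 : 0 ≤ d) (hdD : ∀ x, d x ≤ D)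
    (hr : 0 < r) (N : ℕ) {s t : ℝ} (ht : t ∈ Icc (s - r) s) (ht0 : 0 ≤ t) :
    ∫ σ in (0)..t, g σ * d (t - σ) ≤
      (∫ x in Ioi 0, g x) * ∑ k ∈ Finset.range (N + 1), windowSup r d (s - k * r)
        + D * ∫ x in Ioi (N * r : ℝ), g x := by
  set P := ∑ k ∈ Finset.range (N + 1), windowSup r d (s - k * r)
  set m := min t (N * r)
  have hm0 : 0 ≤ m := le_min ht0 (by positivity)
  have hmt : m ≤ t := min_le_left _ _
  have hD : 0 ≤ D := (hd0 0).trans (hdD 0)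
  have hint : ∀ {b c}, 0 ≤ b → b ≤ c → IntervalIntegrable (fun σ => g σ * d (t - σ)) volume b c :=
    fun hb hbc => (hgi.intervalIntegrable_of_Ioi hb hbc).mul_continuousOn (by fun_prop)
  have hnear : ∫ σ in (0)..m, g σ * d (t - σ) ≤ (∫ x in Ioi 0, g x) * P := by
    calc ∫ σ in (0)..m, g σ * d (t - σ) ≤ ∫ σ in (0)..m, g σ * P := by
          refine intervalIntegral.integral_mono_on hm0 (hint le_rfl hm0)
            ((hgi.intervalIntegrable_of_Ioi le_rfl hm0).mul_const P) fun σ hσ => ?_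
          refine mul_le_mul_of_nonneg_left (le_sum_windowSup hd hd0 hr N ⟨?_, ?_⟩) (hg0 σ)
          · linarith [ht.1, hσ.2, min_le_right t (N * r)]
          · linarith [ht.2, hσ.1]
      _ = (∫ σ in (0)..m, g σ) * P := intervalIntegral.integral_mul_const P g
      _ ≤ (∫ x in Ioi 0, g x) * P := by
          refine mul_le_mul_of_nonneg_right ?_
            (Finset.sum_nonneg fun _ _ => windowSup_nonneg hd0)
          rw [intervalIntegral.integral_of_le hm0]
          exact setIntegral_mono_set hgi (ae_of_all _ fun x => hg0 x)
            (Ioc_subset_Ioi_self.eventuallyLE)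
  have hfar : ∫ σ in m..t, g σ * d (t - σ) ≤ D * ∫ x in Ioi (N * r : ℝ), g x := by
    have hsub : Ioc m t ⊆ Ioi (N * r : ℝ) := fun x hx =>
      lt_of_not_ge fun h => hx.1.not_ge (le_min hx.2 h)
    calc ∫ σ in m..t, g σ * d (t - σ) ≤ ∫ σ in m..t, g σ * D :=
          intervalIntegral.integral_mono_on hmt (hint hm0 hmt)
            ((hgi.intervalIntegrable_of_Ioi hm0 hmt).mul_const D)
            fun σ _ => mul_le_mul_of_nonneg_left (hdD _) (hg0 σ)
      _ = D * ∫ σ in m..t, g σ := by rw [intervalIntegral.integral_mul_const, mul_comm]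
      _ ≤ D * ∫ x in Ioi (N * r : ℝ), g x := by
          refine mul_le_mul_of_nonneg_left ?_ hD
          rw [intervalIntegral.integral_of_le hmt]
          exact setIntegral_mono_set (hgi.mono_set (Ioi_subset_Ioi (by positivity)))
            (ae_of_all _ fun x => hg0 x) hsub.eventuallyLE
  rw [← intervalIntegral.integral_add_adjacent_intervals (hint le_rfl hm0) (hint hm0 hmt)]
  exact add_le_add hnear hfar

end KernelIntegrals

lemma continuous_clm_apply_of_locally_bounded {Y 𝕜 E F : Type*} [TopologicalSpace Y]
    [NontriviallyNormedField 𝕜] [NormedAddCommGroup E] [NormedSpace 𝕜 E] [NormedAddCommGroup F]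
    [NormedSpace 𝕜 F] {K : Y → E →L[𝕜] F} (hK : ∀ x, Continuous fun y => K y x)
    (hbdd : ∀ y₀, ∃ L, ∀ᶠ y in 𝓝 y₀, ‖K y‖ ≤ L) : Continuous fun p : Y × E => K p.1 p.2 := by
  refine continuous_iff_continuousAt.2 fun ⟨y₀, x₀⟩ => ?_
  obtain ⟨L, hL⟩ := hbdd y₀
  have hsmall : Tendsto (fun p : Y × E => K p.1 (p.2 - x₀)) (𝓝 (y₀, x₀)) (𝓝 0) := by
    refine squeeze_zero_norm' ?_ (?_ : Tendsto (fun p : Y × E => L * ‖p.2 - x₀‖) _ (𝓝 0))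
    · filter_upwards [(continuous_fst.tendsto (y₀, x₀)).eventually hL] with p hp
      exact (K p.1).le_of_opNorm_le hp _
    · simpa using ((continuous_snd.sub (continuous_const (y := x₀))).norm.const_mul L).tendsto
        (y₀, x₀)
  simpa [ContinuousAt] using hsmall.add (((hK x₀).comp continuous_fst).tendsto (y₀, x₀))

section OperatorConvolution

variable {X : Type*} [NormedAddCommGroup X] [NormedSpace ℝ X]

/-- The convolution `∫₀ᵗ K(t - s) f(s) ds`, after the substitution `σ = t - s`. -/
noncomputable def opConv (K : ℝ → X →L[ℝ] X) (f : ℝ → X) (t : ℝ) : X :=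
  ∫ σ in (0)..t, K σ (f (t - σ))

variable {K : ℝ → X →L[ℝ] X} {f : ℝ → X} {g : ℝ → ℝ} {B ω r : ℝ}

lemma continuous_opConv (hK : Continuous fun p : ℝ × X => K p.1 p.2) (hf : Continuous f) :
    Continuous (opConv K f) :=
  intervalIntegral.continuous_parametric_intervalIntegral_of_continuous
    (f := fun t σ => K σ (f (t - σ)))
    (hK.comp (continuous_snd.prodMk (hf.comp (continuous_fst.sub continuous_snd)))) continuous_id

lemma norm_opConv_le (hKg : ∀ a, ‖K a‖ ≤ g a) (hgi : IntegrableOn g (Ioi 0))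
    (hfB : ∀ t, ‖f t‖ ≤ B) {t : ℝ} (ht : 0 ≤ t) : ‖opConv K f t‖ ≤ B * ∫ x in Ioi 0, g x := by
  have hB : 0 ≤ B := (norm_nonneg _).trans (hfB 0)
  calc ‖opConv K f t‖ ≤ ∫ σ in (0)..t, g σ * B :=
        intervalIntegral.norm_integral_le_of_norm_le ht (ae_of_all _ fun σ _ =>
          (K σ).le_of_opNorm_le (hKg σ) _ |>.trans
            (mul_le_mul_of_nonneg_left (hfB _) ((norm_nonneg _).trans (hKg σ))))
          ((hgi.intervalIntegrable_of_Ioi le_rfl ht).mul_const B)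
    _ = B * ∫ σ in (0)..t, g σ := by rw [intervalIntegral.integral_mul_const, mul_comm]
    _ ≤ B * ∫ x in Ioi 0, g x := by
        refine mul_le_mul_of_nonneg_left ?_ hB
        rw [intervalIntegral.integral_of_le ht]
        exact setIntegral_mono_set hgi (ae_of_all _ fun x => (norm_nonneg _).trans (hKg x))
          Ioc_subset_Ioi_self.eventuallyLE

lemma norm_opConv_add_sub_le (hK : Continuous fun p : ℝ × X => K p.1 p.2)
    (hKg : ∀ a, ‖K a‖ ≤ g a) (hg : Antitone g) (hgi : IntegrableOn g (Ioi 0))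
    (hf : Continuous f) (hfB : ∀ t, ‖f t‖ ≤ B) (hω : 0 ≤ ω) {t : ℝ} (ht : 0 ≤ t) :
    ‖opConv K f (t + ω) - opConv K f t‖ ≤
      B * ω * g t + ∫ σ in (0)..t, g σ * ‖f (t - σ + ω) - f (t - σ)‖ := by
  have hB : 0 ≤ B := (norm_nonneg _).trans (hfB 0)
  have hint : ∀ h : ℝ → X, Continuous h → ∀ a b,
      IntervalIntegrable (fun σ => K σ (h σ)) volume a b :=
    fun h hh a b => (hK.comp (continuous_id.prodMk hh)).intervalIntegrable a b
  have hsplit : opConv K f (t + ω) - opConv K f t =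
      (∫ σ in t..t + ω, K σ (f (t + ω - σ))) +
        ∫ σ in (0)..t, K σ (f (t - σ + ω) - f (t - σ)) := by
    simp only [opConv, map_sub, sub_add_eq_add_sub]
    rw [← intervalIntegral.integral_add_adjacent_intervals (hint _ (by fun_prop) 0 t)
      (hint _ (by fun_prop) t (t + ω)), intervalIntegral.integral_sub
      (hint _ (by fun_prop) 0 t) (hint _ (by fun_prop) 0 t)]
    abel
  rw [hsplit]
  refine (norm_add_le _ _).trans (add_le_add ?_ ?_)
  · have hbound : ∀ σ ∈ uIoc t (t + ω), ‖K σ (f (t + ω - σ))‖ ≤ g t * B := fun σ hσ => by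
      rw [uIoc_of_le (by linarith)] at hσ
      exact (K σ).le_of_opNorm_le ((hKg σ).trans (hg hσ.1.le)) _ |>.trans
        (mul_le_mul_of_nonneg_left (hfB _) ((norm_nonneg _).trans ((hKg t))))
    refine (intervalIntegral.norm_integral_le_of_norm_le_const hbound).trans_eq ?_
    rw [add_sub_cancel_left, abs_of_nonneg hω]
    ring
  · refine intervalIntegral.norm_integral_le_of_norm_le ht
      (ae_of_all _ fun σ _ => (K σ).le_of_opNorm_le (hKg σ) _) ?_
    exact (hgi.intervalIntegrable_of_Ioi le_rfl ht).mul_continuousOn (by fun_prop)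

lemma windowSup_opConv_sub_le (hK : Continuous fun p : ℝ × X => K p.1 p.2)
    (hKg : ∀ a, ‖K a‖ ≤ g a) (hg : Antitone g) (hgi : IntegrableOn g (Ioi 0))
    (hf : Continuous f) (hfB : ∀ t, ‖f t‖ ≤ B) (hω : 0 ≤ ω) (hr : 0 < r) (N : ℕ) {s : ℝ}
    (hs : r ≤ s) :
    windowSup r (fun τ => ‖opConv K f (τ + ω) - opConv K f τ‖) s ≤
      B * ω * g (s - r) + ((∫ x in Ioi 0, g x) *
        ∑ k ∈ Finset.range (N + 1), windowSup r (fun x => ‖f (x + ω) - f x‖) (s - k * r)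
          + 2 * B * ∫ x in Ioi (N * r : ℝ), g x) := by
  have hB : 0 ≤ B := (norm_nonneg _).trans (hfB 0)
  have hg0 : 0 ≤ g := fun a => (norm_nonneg _).trans (hKg a)
  have hbound : ∀ τ ∈ Icc (s - r) s, ‖opConv K f (τ + ω) - opConv K f τ‖ ≤
      B * ω * g (s - r) + ((∫ x in Ioi 0, g x) *
        ∑ k ∈ Finset.range (N + 1), windowSup r (fun x => ‖f (x + ω) - f x‖) (s - k * r)
          + 2 * B * ∫ x in Ioi (N * r : ℝ), g x) := fun τ hτ => by
    have hτ0 : 0 ≤ τ := by linarith [hτ.1]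
    refine (norm_opConv_add_sub_le hK hKg hg hgi hf hfB hω hτ0).trans (add_le_add ?_ ?_)
    · exact mul_le_mul_of_nonneg_left (hg hτ.1) (by positivity)
    · have hd : Continuous fun x => ‖f (x + ω) - f x‖ := by fun_prop
      exact integral_mul_comp_sub_le_sum_windowSup hg0 hgi hd (fun _ => norm_nonneg _)
        (fun x => (norm_sub_le _ _).trans (by linarith [hfB (x + ω), hfB x])) hr N hτ hτ0
  exact windowSup_le ((norm_nonneg _).trans (hbound s ⟨by linarith, le_rfl⟩)) hbound

theorem PSAPclass.opConv (hK : Continuous fun p : ℝ × X => K p.1 p.2)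
    (hKg : ∀ a, ‖K a‖ ≤ g a) (hg : Antitone g) (hgi : IntegrableOn g (Ioi 0))
    (hf : Continuous f) (hfB : ∀ t, ‖f t‖ ≤ B) (hω : 0 ≤ ω) (hr : 0 < r)
    (hfP : PSAPclass ω r f) : PSAPclass ω r (opConv K f) := by
  set W := windowSup r fun x => ‖f (x + ω) - f x‖
  have hd : Continuous fun x => ‖f (x + ω) - f x‖ := by fun_prop
  have hW : Continuous W := continuous_windowSup hd fun _ => norm_nonneg _
  have hWP : CesaroNull r W := hfP
  have hgr : CesaroNull r fun s => g (s - r) :=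
    (cesaroNull_of_integrableOn (hgi.mono_set (Ioi_subset_Ioi hr.le))).comp_sub
      hg.locallyIntegrable r
  have hgri : LocallyIntegrable fun s => g (s - r) :=
    (hg.comp_monotone fun _ _ h => sub_le_sub_right h r).locallyIntegrable
  have hWi : ∀ c : ℝ, LocallyIntegrable fun s => W (s - c) :=
    fun c => (hW.comp (continuous_sub_right c)).locallyIntegrable
  refine psapClass_iff_cesaroNull.2 (CesaroNull.of_forall_le_add
    (fun s _ => windowSup_nonneg fun _ => norm_nonneg _) fun ε hε => ?_)
  obtain ⟨N, hN⟩ : ∃ N : ℕ, 2 * B * ∫ x in Ioi (N * r : ℝ), g x < ε := by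
    have htail := ((tendsto_setIntegral_Ioi_atTop hgi).comp
      (tendsto_natCast_atTop_atTop.atTop_mul_const hr)).const_mul (2 * B)
    exact (htail.eventually_lt_const (by simpa using hε)).exists
  have hsumi : LocallyIntegrable fun s => ∑ k ∈ Finset.range (N + 1), W (s - k * r) :=
    locallyIntegrable_finsetSum _ fun k _ => hWi (k * r)
  refine ⟨fun s => B * ω * g (s - r) +
      (∫ x in Ioi 0, g x) * ∑ k ∈ Finset.range (N + 1), W (s - k * r), ?_, ?_, fun s hs => ?_⟩
  · exact (hgr.const_mul _).add (CesaroNull.const_mul (cesaroNull_finsetSum _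
      (fun k _ => hWP.comp_sub hW.locallyIntegrable _) fun k _ => hWi _) _)
      (hgri.smul (B * ω)) (hsumi.smul (∫ x in Ioi 0, g x))
  · exact (hgri.smul (B * ω)).add (hsumi.smul (∫ x in Ioi 0, g x))
  · have := windowSup_opConv_sub_le hK hKg hg hgi hf hfB hω hr N hs
    dsimp only
    linarith

lemma opConv_extend_eq {S : ℝ → X →L[ℝ] X} {u : ℝ → X} {c t : ℝ} (hc : c ≤ 0) (ht : 0 ≤ t) :
    opConv (fun a => S (max a 0)) (fun x => u (max x c)) t = ∫ s in (0)..t, S (t - s) (u s) := by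
  have hsub : ∫ s in (0)..t, S (t - s) (u s) = ∫ σ in (0)..t, S σ (u (t - σ)) := by
    simpa using intervalIntegral.integral_comp_sub_left (a := 0) (b := t)
      (fun σ => S σ (u (t - σ))) t
  rw [hsub, opConv]
  refine intervalIntegral.integral_congr fun σ hσ => ?_
  rw [uIcc_of_le ht] at hσ
  simp only [max_eq_left hσ.1, max_eq_left (show c ≤ t - σ by linarith [hσ.2])]

end OperatorConvolution

noncomputable def powerKernel (c b α a : ℝ) : ℝ := c / (1 + b * max a 0 ^ α)

section powerKernel

variable {c b α : ℝ}

lemma powerKernel_antitone (hc : 0 ≤ c) (hb : 0 ≤ b) (hα : 0 ≤ α) :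
    Antitone (powerKernel c b α) := fun x y hxy => by
  unfold powerKernel
  gcongr

lemma integrableOn_powerKernel (hb : 0 < b) (hα : 1 < α) :
    IntegrableOn (powerKernel c b α) (Ioi 0) := by
  have hmeas : AEStronglyMeasurable (powerKernel c b α) :=
    (measurable_const.div (measurable_const.add (measurable_const.mul
      ((measurable_id.max measurable_const).pow_const α)))).aestronglyMeasurable
  have hnear : IntegrableOn (powerKernel c b α) (Ioc 0 1) := by
    refine Measure.integrableOn_of_bounded (M := |c|) measure_Ioc_lt_top.ne hmeas
      (ae_of_all _ fun a => ?_)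
    rw [powerKernel, norm_div, Real.norm_eq_abs, Real.norm_eq_abs]
    have hden : 1 ≤ 1 + b * max a 0 ^ α := le_add_of_nonneg_right (by positivity)
    exact div_le_self (abs_nonneg c) (hden.trans (le_abs_self _))
  have hfar : IntegrableOn (powerKernel c b α) (Ioi 1) := by
    refine Integrable.mono' ((integrableOn_Ioi_rpow_of_lt (neg_lt_neg hα) one_pos).const_mul
      (|c| / b)) hmeas.restrict ?_
    filter_upwards [ae_restrict_mem measurableSet_Ioi] with a (ha : 1 < a)
    have ha0 : 0 < a := one_pos.trans ha
    rw [powerKernel, max_eq_left ha0.le, norm_div, Real.norm_eq_abs, Real.norm_eq_abs,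
      abs_of_pos (show 0 < 1 + b * a ^ α by positivity), Real.rpow_neg ha0.le, ← div_eq_mul_inv,
      div_div]
    gcongr
    linarith
  simpa using hnear.union hfar

end powerKernel

theorem convolution_psapClass_general {X : Type*} [NormedAddCommGroup X] [NormedSpace ℝ X]
    (α μ C M r ω : ℝ) (hα1 : 1 < α) (hμ : μ < 0) (hC : 0 < C) (hM : 0 < M)
    (hr : 0 < r) (hω : 0 < ω)
    (S : ℝ → X →L[ℝ] X)
    (hScont : ∀ x : X, ContinuousOn (fun t => S t x) (Set.Ici 0))
    (hSb : ∀ t ≥ (0:ℝ), ‖S t‖ ≤ C * M / (1 + |μ| * t ^ α))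
    (u : ℝ → X)
    (hucont : ContinuousOn u (Set.Ici (-r)))
    (hubdd : ∃ B, ∀ t ≥ -r, ‖u t‖ ≤ B)
    (huP : PSAPclass ω r u)
    (κ : ℝ → X)
    (hκ0 : ∀ t ∈ Set.Icc (-r) (0:ℝ), κ t = 0)
    (hκ : ∀ t ≥ (0:ℝ), κ t = ∫ s in (0:ℝ)..t, S (t - s) (u s)) :
    ContinuousOn κ (Set.Ici (-r)) ∧ (∃ B, ∀ t ≥ -r, ‖κ t‖ ≤ B) ∧ PSAPclass ω r κ := by
  obtain ⟨B, hB⟩ := hubdd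
  set g := powerKernel (C * M) |μ| α
  set K : ℝ → X →L[ℝ] X := fun a => S (max a 0)
  set v : ℝ → X := fun t => u (max t (-r))
  have hg : Antitone g := powerKernel_antitone (by positivity) (abs_nonneg μ) (by linarith)
  have hgi : IntegrableOn g (Ioi 0) := integrableOn_powerKernel (abs_pos.2 hμ.ne) hα1
  have hKg : ∀ a, ‖K a‖ ≤ g a := fun a => hSb _ (le_max_right a 0)
  have hK : Continuous fun p : ℝ × X => K p.1 p.2 :=
    continuous_clm_apply_of_locally_bounded
      (fun x => (hScont x).comp_continuous (by fun_prop) fun a => le_max_right a 0)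
      fun a => ⟨g (a - 1), (lt_mem_nhds (sub_one_lt a)).mono fun b hb => (hKg b).trans (hg hb.le)⟩
  have hv : Continuous v := hucont.comp_continuous (by fun_prop) fun t => le_max_right t (-r)
  have hvB : ∀ t, ‖v t‖ ≤ B := fun t => hB _ (le_max_right t (-r))
  have hvu : EqOn u v (Ici 0) := fun t (ht : 0 ≤ t) => by
    simp only [v, max_eq_left (show -r ≤ t by linarith)]
  have hκv : EqOn (opConv K v) κ (Ici 0) := fun t (ht : 0 ≤ t) =>
    (opConv_extend_eq (neg_nonpos.2 hr.le) ht).trans (hκ t ht).symm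
  have hκ' : EqOn κ (opConv K v ∘ fun t => max t 0) (Ici (-r)) := fun t (ht : -r ≤ t) => by
    rcases le_total t 0 with h | h
    · simp [max_eq_right h, opConv, hκ0 t ⟨ht, h⟩]
    · simp [max_eq_left h, hκv h]
  refine ⟨((continuous_opConv hK hv).comp (continuous_id.max continuous_const)).continuousOn.congr
      hκ', ⟨B * ∫ x in Ioi 0, g x, fun t ht => ?_⟩,
    (huP.congr hω.le hvu).opConv hK hKg hg hgi hv hvB hω.le hr |>.congr hω.le hκv⟩
  rw [hκ' ht]
  exact norm_opConv_le hKg hgi hvB (le_max_right t 0)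

/-- Lemma 2.5: if `‖S(t)‖ ≤ CM/(1+|μ|t^α)` with `S` strongly continuous,
`u ∈ C_b([−r,∞),X)` with `u|_{[0,∞)} ∈ PSAP_{ω,r}(X)`, and `κ(t) = 0` on `[−r,0]`,
`κ(t) = ∫_0^t S(t−s)u(s) ds` for `t ≥ 0`, then `κ ∈ C_b([−r,∞),X)` and
`κ|_{[0,∞)} ∈ PSAP_{ω,r}(X)`. -/
theorem convolution_psapClass {X : Type*} [NormedAddCommGroup X] [NormedSpace ℝ X]
    [CompleteSpace X]
    (α μ C M r ω : ℝ) (hα1 : 1 < α) (hα2 : α < 2) (hμ : μ < 0) (hC : 0 < C) (hM : 0 < M)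
    (hr : 0 < r) (hω : 0 < ω)
    (S : ℝ → X →L[ℝ] X)
    (hScont : ∀ x : X, ContinuousOn (fun t => S t x) (Set.Ici 0))
    (hSb : ∀ t ≥ (0:ℝ), ‖S t‖ ≤ C * M / (1 + |μ| * t ^ α))
    (u : ℝ → X)
    (hucont : ContinuousOn u (Set.Ici (-r)))
    (hubdd : ∃ B, ∀ t ≥ -r, ‖u t‖ ≤ B)
    (huP : PSAPclass ω r u)
    (κ : ℝ → X)
    (hκ0 : ∀ t ∈ Set.Icc (-r) (0:ℝ), κ t = 0)
    (hκ : ∀ t ≥ (0:ℝ), κ t = ∫ s in (0:ℝ)..t, S (t - s) (u s)) :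
    ContinuousOn κ (Set.Ici (-r)) ∧ (∃ B, ∀ t ≥ -r, ‖κ t‖ ≤ B) ∧ PSAPclass ω r κ :=
  convolution_psapClass_general α μ C M r ω hα1 hμ hC hM hr hω S hScont hSb u hucont hubdd huP κ hκ0
    hκ
end

section
/- Let 1 < α < 2, μ < 0, C > 0, M > 0, and let S : [0,∞) → B(X) be a strongly continuous family of bounded linear operators on a Banach space X satisfying ‖S(t)‖ ≤ CM/(1 + |μ|t^α) for all t ≥ 0. Then for every x ∈ X, ω > 0, and r > 0, the function t ↦ S(t)x belongs to PSAP_{ω,r}(X); more precisely, (1/T)∫_r^T sup_{τ∈[s−r,s]} ‖S(τ+ω)x − S(τ)x‖ ds ≤ (2CM|μ|^{−1/α}π / (α sin(π/α))) · ‖x‖ / T for all T > r, and in particular this average tends to 0 as T → ∞. -/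
/-!
The orbit `t ↦ S t x` is dominated by `g t = C M ‖x‖ / (1 + |μ| t ^ α)`, which is decreasing,
so on the window `[s - r, s]` both `S (τ + ω) x` and `S τ x` are bounded by `g (s - r)`.
Integrating over `s ∈ [r, T]` and shifting by `r`, the integral of the windowed suprema is at
most `2 ∫₀^∞ g`, which is finite because `α > 1`; dividing by `T` gives the `O(1/T)` bound.
Its value follows by writing `(1 + b t ^ α)⁻¹ = ∫₀^∞ exp (-(1 + b t ^ α) s) ds`, integrating
first in `t` to get `b ^ (-1/α) Γ(1 + 1/α) Γ(1 - 1/α)`, and applying Euler's reflection formula.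
-/

open MeasureTheory Filter Set

open Real

section InverseRpowIntegral

variable {α b : ℝ}

lemma exp_neg_mul_exp_neg_mul_rpow (s t : ℝ) :
    exp (-s) * exp (-(s * b) * t ^ α) = exp ((-(1 + b * t ^ α)) * s) := by
  rw [← exp_add]; ring_nf

lemma integral_Ioi_exp_neg_mul_exp_neg_mul_rpow_fst (hb : 0 < b) {t : ℝ} (ht : 0 ≤ t) :
    ∫ s in Ioi (0 : ℝ), exp (-s) * exp (-(s * b) * t ^ α) = (1 + b * t ^ α)⁻¹ := by
  have hc : 0 < 1 + b * t ^ α := by positivity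
  simp_rw [exp_neg_mul_exp_neg_mul_rpow]
  rw [integral_exp_mul_Ioi (neg_lt_zero.mpr hc), mul_zero, exp_zero, neg_div_neg_eq, one_div]

lemma integral_Ioi_exp_neg_mul_exp_neg_mul_rpow_snd (hα : 0 < α) (hb : 0 < b) {s : ℝ}
    (hs : 0 < s) :
    ∫ t in Ioi (0 : ℝ), exp (-s) * exp (-(s * b) * t ^ α)
      = b ^ (-1 / α) * Gamma (1 / α + 1) * (exp (-s) * s ^ ((1 - 1 / α) - 1)) := by
  rw [integral_const_mul, integral_exp_neg_mul_rpow hα (mul_pos hs hb),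
    mul_rpow hs.le hb.le]
  ring_nf

lemma integrable_exp_neg_mul_exp_neg_mul_rpow (hα : 1 < α) (hb : 0 < b) :
    Integrable (Function.uncurry fun s t : ℝ => exp (-s) * exp (-(s * b) * t ^ α))
      ((volume.restrict (Ioi 0)).prod (volume.restrict (Ioi 0))) := by
  have hα0 : 0 < α := by linarith
  have hmeas : AEStronglyMeasurable (Function.uncurry fun s t : ℝ =>
      exp (-s) * exp (-(s * b) * t ^ α))
      ((volume.restrict (Ioi 0)).prod (volume.restrict (Ioi 0))) := by
    fun_prop
  rw [integrable_prod_iff hmeas]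
  constructor
  · rw [ae_restrict_iff' measurableSet_Ioi]
    refine Eventually.of_forall fun s (hs : 0 < s) => ?_
    simpa using (integrableOn_rpow_mul_exp_neg_mul_rpow (by norm_num : (-1 : ℝ) < 0) hα0
      (mul_pos hs hb)).const_mul (exp (-s))
  · have hΓ : 0 < 1 - 1 / α := by rw [sub_pos, div_lt_one hα0]; exact hα
    refine ((GammaIntegral_convergent hΓ).const_mul (b ^ (-1 / α) * Gamma (1 / α + 1))).congr ?_
    rw [EventuallyEq, ae_restrict_iff' measurableSet_Ioi]
    refine Eventually.of_forall fun s (hs : 0 < s) => ?_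
    simp only [Function.uncurry_apply_pair, norm_mul, Real.norm_of_nonneg (exp_nonneg _)]
    exact (integral_Ioi_exp_neg_mul_exp_neg_mul_rpow_snd hα0 hb hs).symm

lemma integrableOn_inv_one_add_mul_rpow (hα : 1 < α) (hb : 0 < b) :
    IntegrableOn (fun t : ℝ => (1 + b * t ^ α)⁻¹) (Ioi 0) := by
  refine (integrable_exp_neg_mul_exp_neg_mul_rpow hα hb).integral_prod_right.congr ?_
  rw [EventuallyEq, ae_restrict_iff' measurableSet_Ioi]
  exact Eventually.of_forall fun t (ht : 0 < t) =>
    integral_Ioi_exp_neg_mul_exp_neg_mul_rpow_fst hb ht.le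

lemma integral_Ioi_inv_one_add_mul_rpow (hα : 1 < α) (hb : 0 < b) :
    ∫ t in Ioi (0 : ℝ), (1 + b * t ^ α)⁻¹ = b ^ (-(1 / α)) * (π / (α * sin (π / α))) := by
  have hα0 : 0 < α := by linarith
  have hΓ : 0 < 1 - 1 / α := by rw [sub_pos, div_lt_one hα0]; exact hα
  calc ∫ t in Ioi (0 : ℝ), (1 + b * t ^ α)⁻¹
      = ∫ t in Ioi (0 : ℝ), ∫ s in Ioi (0 : ℝ), exp (-s) * exp (-(s * b) * t ^ α) :=
        setIntegral_congr_fun measurableSet_Ioi fun t (ht : 0 < t) =>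
          (integral_Ioi_exp_neg_mul_exp_neg_mul_rpow_fst hb ht.le).symm
    _ = ∫ s in Ioi (0 : ℝ), ∫ t in Ioi (0 : ℝ), exp (-s) * exp (-(s * b) * t ^ α) :=
        (integral_integral_swap (integrable_exp_neg_mul_exp_neg_mul_rpow hα hb)).symm
    _ = ∫ s in Ioi (0 : ℝ), b ^ (-1 / α) * Gamma (1 / α + 1) * (exp (-s) * s ^ ((1 - 1 / α) - 1)) :=
        setIntegral_congr_fun measurableSet_Ioi fun s (hs : 0 < s) =>
          integral_Ioi_exp_neg_mul_exp_neg_mul_rpow_snd hα0 hb hs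
    _ = b ^ (-1 / α) * (Gamma (1 / α + 1) * Gamma (1 - 1 / α)) := by
        rw [integral_const_mul, ← Gamma_eq_integral hΓ, mul_assoc]
    _ = b ^ (-(1 / α)) * (π / (α * sin (π / α))) := by
        rw [Gamma_add_one (by positivity), mul_assoc, Gamma_mul_Gamma_one_sub, neg_div]
        field_simp

end InverseRpowIntegral

section DominatedDifferences

variable {X : Type*} [NormedAddCommGroup X] {v : ℝ → X} {g : ℝ → ℝ} {ω r : ℝ}

lemma iSup_Icc_norm_sub_nonneg (s : ℝ) : 0 ≤ ⨆ τ ∈ Icc (s - r) s, ‖v (τ + ω) - v τ‖ :=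
  Real.iSup_nonneg fun _ => Real.iSup_nonneg fun _ => norm_nonneg _

lemma iSup_Icc_norm_sub_le (hv : ∀ t ≥ 0, ‖v t‖ ≤ g t) (hg : AntitoneOn g (Ici 0))
    (hω : 0 ≤ ω) {s : ℝ} (hrs : r ≤ s) :
    ⨆ τ ∈ Icc (s - r) s, ‖v (τ + ω) - v τ‖ ≤ 2 * g (s - r) := by
  have hsr : 0 ≤ s - r := sub_nonneg.mpr hrs
  have hle : ∀ u ≥ s - r, ‖v u‖ ≤ g (s - r) := fun u hu =>
    (hv u (hsr.trans hu)).trans (hg hsr (hsr.trans hu) hu)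
  have hnonneg : 0 ≤ 2 * g (s - r) := by linarith [(norm_nonneg _).trans (hle (s - r) le_rfl)]
  refine Real.iSup_le (fun τ => Real.iSup_le (fun hτ => ?_) hnonneg) hnonneg
  calc ‖v (τ + ω) - v τ‖ ≤ ‖v (τ + ω)‖ + ‖v τ‖ := norm_sub_le _ _
    _ ≤ g (s - r) + g (s - r) := add_le_add (hle _ (by linarith [hτ.1])) (hle _ hτ.1)
    _ = 2 * g (s - r) := by ring

lemma integral_iSup_Icc_norm_sub_le (hv : ∀ t ≥ 0, ‖v t‖ ≤ g t) (hg : AntitoneOn g (Ici 0))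
    (hgi : IntegrableOn g (Ioi 0)) (hω : 0 ≤ ω) {T : ℝ} (hrT : r ≤ T) :
    ∫ s in r..T, ⨆ τ ∈ Icc (s - r) s, ‖v (τ + ω) - v τ‖ ≤ 2 * ∫ t in Ioi 0, g t := by
  have hg0 : ∀ t ∈ Ioi (0 : ℝ), 0 ≤ g t := fun t ht => (norm_nonneg _).trans (hv t ht.le)
  have hgT : IntervalIntegrable g volume 0 (T - r) :=
    (intervalIntegrable_iff_integrableOn_Ioc_of_le (sub_nonneg.mpr hrT)).mpr
      (hgi.mono_set Ioc_subset_Ioi_self)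
  have hshift : IntervalIntegrable (fun s => g (s - r)) volume r T := by
    simpa using hgT.comp_sub_right r
  calc ∫ s in r..T, ⨆ τ ∈ Icc (s - r) s, ‖v (τ + ω) - v τ‖
      ≤ ∫ s in r..T, 2 * g (s - r) := by
        rw [intervalIntegral.integral_of_le hrT, intervalIntegral.integral_of_le hrT]
        refine integral_mono_of_nonneg (Eventually.of_forall iSup_Icc_norm_sub_nonneg)
          (hshift.1.const_mul 2) ?_
        rw [EventuallyLE, ae_restrict_iff' measurableSet_Ioc]
        exact Eventually.of_forall fun s hs => iSup_Icc_norm_sub_le hv hg hω hs.1.le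
    _ = 2 * ∫ t in Ioc 0 (T - r), g t := by
        rw [intervalIntegral.integral_const_mul, intervalIntegral.integral_comp_sub_right,
          sub_self, intervalIntegral.integral_of_le (sub_nonneg.mpr hrT)]
    _ ≤ 2 * ∫ t in Ioi 0, g t := by
        refine mul_le_mul_of_nonneg_left ?_ zero_le_two
        exact setIntegral_mono_set hgi ((ae_restrict_iff' measurableSet_Ioi).mpr
          (Eventually.of_forall hg0)) Ioc_subset_Ioi_self.eventuallyLE

lemma PSAPclass_of_average_le {K : ℝ}
    (h : ∀ T > r, (1 / T) * (∫ s in r..T, ⨆ τ ∈ Icc (s - r) s, ‖v (τ + ω) - v τ‖) ≤ K / T) :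
    PSAPclass ω r v := by
  refine squeeze_zero' (g := fun T => K / T) ?_ ?_ (tendsto_const_nhds.div_atTop tendsto_id)
  · filter_upwards [eventually_ge_atTop r, eventually_ge_atTop 0] with T hrT hT
    exact mul_nonneg (by positivity)
      (intervalIntegral.integral_nonneg hrT fun s _ => iSup_Icc_norm_sub_nonneg s)
  · filter_upwards [eventually_gt_atTop r] with T hT using h T hT

end DominatedDifferences

theorem solution_operator_psapClass_general {X : Type*} [NormedAddCommGroup X] [NormedSpace ℝ X]
    (α μ C M : ℝ) (hα1 : 1 < α) (hμ : μ < 0)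
    (S : ℝ → X →L[ℝ] X)
    (hSb : ∀ t ≥ (0:ℝ), ‖S t‖ ≤ C * M / (1 + |μ| * t ^ α))
    (x : X) (ω r : ℝ) (hω : 0 < ω) (hr : 0 < r) :
    (∀ T > r,
      (1 / T) * (∫ s in r..T, ⨆ τ ∈ Set.Icc (s - r) s, ‖S (τ + ω) x - S τ x‖) ≤
        2 * C * M * |μ| ^ (-(1 / α)) * Real.pi / (α * Real.sin (Real.pi / α)) * ‖x‖ / T) ∧
    PSAPclass ω r (fun t => S t x) := by
  have hb : 0 < |μ| := abs_pos.mpr hμ.ne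
  have hCM : 0 ≤ C * M := by
    simpa [zero_rpow (by linarith : α ≠ 0)] using (norm_nonneg _).trans (hSb 0 le_rfl)
  set g : ℝ → ℝ := fun t => C * M * ‖x‖ * (1 + |μ| * t ^ α)⁻¹
  have hv : ∀ t ≥ 0, ‖S t x‖ ≤ g t := fun t ht => by
    calc ‖S t x‖ ≤ ‖S t‖ * ‖x‖ := (S t).le_opNorm x
      _ ≤ C * M / (1 + |μ| * t ^ α) * ‖x‖ := by gcongr; exact hSb t ht
      _ = g t := by simp only [g]; ring
  have hg : AntitoneOn g (Ici 0) := fun t (ht : 0 ≤ t) u _ htu => by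
    simp only [g]; gcongr
  have hgi : IntegrableOn g (Ioi 0) := (integrableOn_inv_one_add_mul_rpow hα1 hb).const_mul _
  have hbound : ∀ T > r,
      (1 / T) * (∫ s in r..T, ⨆ τ ∈ Icc (s - r) s, ‖S (τ + ω) x - S τ x‖) ≤
        2 * C * M * |μ| ^ (-(1 / α)) * π / (α * sin (π / α)) * ‖x‖ / T := fun T hT => by
    calc (1 / T) * (∫ s in r..T, ⨆ τ ∈ Icc (s - r) s, ‖S (τ + ω) x - S τ x‖)
        ≤ (1 / T) * (2 * ∫ t in Ioi 0, g t) := by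
          gcongr ?_ * ?_
          · exact one_div_nonneg.mpr (hr.trans hT).le
          · exact integral_iSup_Icc_norm_sub_le hv hg hgi hω.le hT.le
      _ = _ := by
          rw [integral_const_mul, integral_Ioi_inv_one_add_mul_rpow hα1 hb]; ring
  exact ⟨hbound, PSAPclass_of_average_le hbound⟩

/-- estimate (3.4): if `‖S(t)‖ ≤ CM/(1+|μ|t^α)` with `S` strongly
continuous, then for every `x`, `t ↦ S(t)x ∈ PSAP_{ω,r}(X)`; more precisely the averaged
quantity is bounded by `2CM|μ|^{−1/α}π/(α sin(π/α))·‖x‖/T` and tends to `0`. -/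
theorem solution_operator_psapClass {X : Type*} [NormedAddCommGroup X] [NormedSpace ℝ X]
    (α μ C M : ℝ) (hα1 : 1 < α) (hα2 : α < 2) (hμ : μ < 0) (hC : 0 < C) (hM : 0 < M)
    (S : ℝ → X →L[ℝ] X)
    (hScont : ∀ y : X, ContinuousOn (fun t => S t y) (Set.Ici 0))
    (hSb : ∀ t ≥ (0:ℝ), ‖S t‖ ≤ C * M / (1 + |μ| * t ^ α))
    (x : X) (ω r : ℝ) (hω : 0 < ω) (hr : 0 < r) :
    (∀ T > r,
      (1 / T) * (∫ s in r..T, ⨆ τ ∈ Set.Icc (s - r) s, ‖S (τ + ω) x - S τ x‖) ≤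
        2 * C * M * |μ| ^ (-(1 / α)) * Real.pi / (α * Real.sin (Real.pi / α)) * ‖x‖ / T) ∧
    PSAPclass ω r (fun t => S t x) :=
  solution_operator_psapClass_general α μ C M hα1 hμ S hSb x ω r hω hr
end
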